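/- Let H ⊂ ℝ⁴ be any hyperplane through the origin, given as H = {x ∈ ℝ⁴ : B(ρ,x) = 0} for some nonzero ρ ∈ ℝ⁴. Then for every ε > 0 there exists a lattice root α of Γ^{2,2} (viewed as a point of ℝ⁴) with |B(ρ,α)| < ε·‖ρ‖₂; equivalently, either H contains a lattice root or there are lattice roots at arbitrarily small (Euclidean) distance from H. -/

import Mathlib

/-- The bilinear form of `Γ^{2,2}` extended ℝ-bilinearly to `ℝ⁴`. -/
def GammaBR (x y : EuclideanSpace ℝ (Fin 4)) : ℝ :=
  -(x 0 * y 1 + x 1 * y 0) - (x 2 * y 3 + x 3 * y 2)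

/-- A lattice root of `Γ^{2,2}`: an element `(k,l,m,n)` with `kl + mn = -1`,
equivalently of norm `B(α,α) = 2`. -/
def IsLatticeRoot (α : Fin 4 → ℤ) : Prop :=
  α 0 * α 1 + α 2 * α 3 = -1

/-! Write `B(ρ, α) = -(c · α)` with `c = (ρ₁, ρ₀, ρ₃, ρ₂)`. For coprime `J, K` with
`uJ + vK = 1`, the roots `(J, tK - u, K, -tJ - v)`, `t ∈ ℤ`, have pairings with `c` filling a coset
`A + ℤ (c₁K - c₃J)`. If a ratio `cᵢ / cⱼ` of coordinates from the two hyperbolic planes is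
irrational, Dirichlet's theorem makes the step `c₁K - c₃J` nonzero and arbitrarily small, so some
pairing is small. Otherwise `c` is a real multiple of an integer vector `d`, and there is a root
exactly orthogonal to `d`: viewing `d` as a `2 × 2` integer matrix and roots as integer matrices
of determinant `-1`, the pairing is a trace, and the Euclidean algorithm by row and column
operations reduces to the case `d₀ ∣ d₂, d₃`, where `(d₃/d₀ - d₂/d₀, 0, 1, -1)` is orthogonal. -/

def HasOrthogonalRoot (d₀ d₁ d₂ d₃ : ℤ) : Prop :=
  ∃ k l m n : ℤ, k * l + m * n = -1 ∧ d₀ * k + d₁ * l + d₂ * m + d₃ * n = 0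

namespace HasOrthogonalRoot

theorem of_dvd {d₀ d₂ d₃ : ℤ} (d₁ : ℤ) (h₂ : d₀ ∣ d₂) (h₃ : d₀ ∣ d₃) :
    HasOrthogonalRoot d₀ d₁ d₂ d₃ := by
  obtain ⟨a, rfl⟩ := h₂
  obtain ⟨b, rfl⟩ := h₃
  exact ⟨b - a, 0, 1, -1, by ring, by ring⟩

/- With `d` read as the matrix `[[d₀, -d₃], [d₂, d₁]]` and a root `(k, l, m, n)` as
`[[k, m], [-n, l]]`, the pairing is the trace of the product, and these two moves reduce the
first column (resp. row) by a row (resp. column) operation followed by a swap. -/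

theorem of_reduce_col {d₀ d₁ d₂ d₃ : ℤ} (q : ℤ)
    (h : HasOrthogonalRoot (d₂ - q * d₀) d₃ (-d₀) (-(d₁ + q * d₃))) :
    HasOrthogonalRoot d₀ d₁ d₂ d₃ := by
  obtain ⟨k, l, m, n, hroot, horth⟩ := h
  exact ⟨-m - q * k, -n, k, l - q * n, by linear_combination hroot, by linear_combination horth⟩

theorem of_reduce_row {d₀ d₁ d₂ d₃ : ℤ} (q : ℤ)
    (h : HasOrthogonalRoot (-(d₃ - q * d₀)) (-d₂) (d₁ + q * d₂) d₀) :
    HasOrthogonalRoot d₀ d₁ d₂ d₃ := by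
  obtain ⟨k, l, m, n, hroot, horth⟩ := h
  exact ⟨n + q * k, m, q * m - l, -k, by linear_combination hroot, by linear_combination horth⟩

theorem of_ne_zero {d₀ : ℤ} (d₁ d₂ d₃ : ℤ) (h₀ : d₀ ≠ 0) : HasOrthogonalRoot d₀ d₁ d₂ d₃ := by
  induction hN : d₀.natAbs using Nat.strong_induction_on generalizing d₀ d₁ d₂ d₃ with
  | _ N ih =>
  have emod_lt (a : ℤ) : (a % d₀).natAbs < N := by
    rw [← hN, ← Int.natAbs_abs d₀]
    exact Int.natAbs_lt_natAbs_of_nonneg_of_lt (Int.emod_nonneg a h₀) (Int.emod_lt_abs a h₀)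
  by_cases h₂ : d₂ % d₀ = 0
  · by_cases h₃ : d₃ % d₀ = 0
    · exact of_dvd d₁ (Int.dvd_of_emod_eq_zero h₂) (Int.dvd_of_emod_eq_zero h₃)
    · refine of_reduce_row (d₃ / d₀) ?_
      rw [mul_comm, ← Int.emod_def]
      exact ih _ (by simpa using emod_lt d₃) _ _ _ (neg_ne_zero.2 h₃) (by simp)
  · refine of_reduce_col (d₂ / d₀) ?_
    rw [mul_comm, ← Int.emod_def]
    exact ih _ (emod_lt d₂) _ _ _ h₂ rfl

end HasOrthogonalRoot

theorem hasOrthogonalRoot (d₀ d₁ d₂ d₃ : ℤ) : HasOrthogonalRoot d₀ d₁ d₂ d₃ := by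
  rcases eq_or_ne d₀ 0 with rfl | h₀
  · rcases eq_or_ne d₂ 0 with rfl | h₂
    · rcases eq_or_ne d₃ 0 with rfl | h₃
      · exact .of_dvd d₁ (dvd_refl 0) (dvd_refl 0)
      · exact .of_reduce_row 0 (.of_ne_zero _ _ _ (by simpa using h₃))
    · exact .of_reduce_col 0 (.of_ne_zero _ _ _ (by simpa using h₂))
  · exact .of_ne_zero _ _ _ h₀

def HasNearlyOrthogonalRoot (c₀ c₁ c₂ c₃ ε : ℝ) : Prop :=
  ∃ k l m n : ℤ, k * l + m * n = -1 ∧ |c₀ * k + c₁ * l + c₂ * m + c₃ * n| < ε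

namespace HasNearlyOrthogonalRoot

variable {c₀ c₁ c₂ c₃ ε : ℝ}

theorem of_swap₀₁ (h : HasNearlyOrthogonalRoot c₁ c₀ c₂ c₃ ε) :
    HasNearlyOrthogonalRoot c₀ c₁ c₂ c₃ ε := by
  obtain ⟨k, l, m, n, hroot, hlt⟩ := h
  exact ⟨l, k, m, n, by linear_combination hroot, by convert hlt using 2; ring⟩

theorem of_swap₂₃ (h : HasNearlyOrthogonalRoot c₀ c₁ c₃ c₂ ε) :
    HasNearlyOrthogonalRoot c₀ c₁ c₂ c₃ ε := by
  obtain ⟨k, l, m, n, hroot, hlt⟩ := h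
  exact ⟨k, l, n, m, by linear_combination hroot, by convert hlt using 2; ring⟩

end HasNearlyOrthogonalRoot

theorem hasNearlyOrthogonalRoot_of_rat (t : ℝ) (q₀ q₁ q₂ q₃ : ℚ) {ε : ℝ} (hε : 0 < ε) :
    HasNearlyOrthogonalRoot (t * q₀) (t * q₁) (t * q₂) (t * q₃) ε := by
  obtain ⟨k, l, m, n, hroot, horth⟩ := hasOrthogonalRoot
    (q₀.num * q₁.den * q₂.den * q₃.den) (q₀.den * q₁.num * q₂.den * q₃.den)
    (q₀.den * q₁.den * q₂.num * q₃.den) (q₀.den * q₁.den * q₂.den * q₃.num)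
  refine ⟨k, l, m, n, hroot, ?_⟩
  have hpairing : t * q₀ * k + t * q₁ * l + t * q₂ * m + t * q₃ * n =
      t / (q₀.den * q₁.den * q₂.den * q₃.den) *
        ((q₀.num * q₁.den * q₂.den * q₃.den * k + q₀.den * q₁.num * q₂.den * q₃.den * l +
          q₀.den * q₁.den * q₂.num * q₃.den * m + q₀.den * q₁.den * q₂.den * q₃.num * n : ℤ) : ℝ) := by
    simp only [Rat.cast_def]
    push_cast
    field_simp
  rw [hpairing, horth]
  simpa using hε

theorem exists_isCoprime_abs_mul_sub_lt (ξ : ℝ) {δ : ℝ} (hδ : 0 < δ) :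
    ∃ J K : ℤ, IsCoprime J K ∧ 0 < K ∧ |K * ξ - J| < δ := by
  obtain ⟨n, hn⟩ := exists_nat_one_div_lt hδ
  obtain ⟨q, hq, -⟩ := Real.exists_rat_abs_sub_le_and_den_le ξ n.succ_pos
  refine ⟨q.num, q.den, q.isCoprime_num_den, by exact_mod_cast q.pos, ?_⟩
  calc |(q.den : ℤ) * ξ - q.num| = |(q.den : ℝ) * (ξ - q)| := by
        rw [Rat.cast_def]
        push_cast
        field_simp
    _ = q.den * |ξ - q| := by rw [abs_mul, Nat.abs_cast]
    _ ≤ q.den * (1 / ((n.succ + 1) * q.den)) := by gcongr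
    _ = 1 / (n.succ + 1) := by field_simp
    _ < 1 / (n + 1) := by gcongr; linarith
    _ < δ := hn

theorem exists_int_abs_add_mul_le (A : ℝ) {s : ℝ} (hs : s ≠ 0) :
    ∃ t : ℤ, |A + t * s| ≤ |s| / 2 := by
  refine ⟨-round (A / s), ?_⟩
  calc |A + ((-round (A / s) : ℤ) : ℝ) * s| = |s| * |A / s - round (A / s)| := by
        rw [← abs_mul]
        congr 1
        push_cast
        field_simp
        ring
    _ ≤ |s| * (1 / 2) := by gcongr; exact abs_sub_round _
    _ = |s| / 2 := by ring

theorem exists_root_pairing_eq_add_mul (c₀ c₁ c₂ c₃ : ℝ) {J K : ℤ} (hJK : IsCoprime J K) :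
    ∃ A : ℝ, ∀ t : ℤ, ∃ k l m n : ℤ, k * l + m * n = -1 ∧
      c₀ * k + c₁ * l + c₂ * m + c₃ * n = A + t * (c₁ * K - c₃ * J) := by
  obtain ⟨u, v, huv⟩ := hJK
  refine ⟨c₀ * J - c₁ * u + c₂ * K - c₃ * v, fun t => ?_⟩
  exact ⟨J, -u + t * K, K, -v - t * J, by linear_combination -huv, by push_cast; ring⟩

theorem hasNearlyOrthogonalRoot_of_irrational (c₀ c₂ : ℝ) {c₁ c₃ ε : ℝ}
    (h : Irrational (c₁ / c₃)) (hε : 0 < ε) : HasNearlyOrthogonalRoot c₀ c₁ c₂ c₃ ε := by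
  have hc₃ : c₃ ≠ 0 := by rintro rfl; simp at h -- `c₁ / 0 = 0` is rational
  have hc₃' : 0 < |c₃| := abs_pos.2 hc₃
  obtain ⟨J, K, hJK, hK, hclose⟩ :=
    exists_isCoprime_abs_mul_sub_lt (c₁ / c₃) (div_pos (mul_pos two_pos hε) hc₃')
  have hs : c₁ * K - c₃ * J = c₃ * (K * (c₁ / c₃) - J) := by field_simp
  have hs₀ : c₁ * K - c₃ * J ≠ 0 := by
    rw [hs]
    exact mul_ne_zero hc₃ (sub_ne_zero.2 ((h.intCast_mul hK.ne').ne_int J))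
  have hs_lt : |c₁ * K - c₃ * J| < 2 * ε := by
    rw [hs, abs_mul, ← lt_div_iff₀' hc₃']
    exact hclose
  obtain ⟨A, hA⟩ := exists_root_pairing_eq_add_mul c₀ c₁ c₂ c₃ hJK
  obtain ⟨t, ht⟩ := exists_int_abs_add_mul_le A hs₀
  obtain ⟨k, l, m, n, hroot, hpairing⟩ := hA t
  exact ⟨k, l, m, n, hroot, by rw [hpairing]; linarith⟩

theorem hasNearlyOrthogonalRoot_of_ne_zero (c₀ c₂ : ℝ) {c₁ c₃ ε : ℝ} (hc₁ : c₁ ≠ 0)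
    (hc₃ : c₃ ≠ 0) (hε : 0 < ε) : HasNearlyOrthogonalRoot c₀ c₁ c₂ c₃ ε := by
  by_cases h₁₃ : Irrational (c₁ / c₃)
  · exact hasNearlyOrthogonalRoot_of_irrational c₀ c₂ h₁₃ hε
  by_cases h₀₃ : Irrational (c₀ / c₃)
  · exact (hasNearlyOrthogonalRoot_of_irrational c₁ c₂ h₀₃ hε).of_swap₀₁
  by_cases h₁₂ : Irrational (c₁ / c₂)
  · exact (hasNearlyOrthogonalRoot_of_irrational c₀ c₃ h₁₂ hε).of_swap₂₃
  obtain ⟨q₀, hq₀⟩ := not_not.1 h₀₃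
  obtain ⟨q₁, hq₁⟩ := not_not.1 h₁₃
  obtain ⟨q₁₂, hq₁₂⟩ := not_not.1 h₁₂
  -- also for `c₂ = 0`, as then both sides are `0`
  have hq₂ : ((q₁ / q₁₂ : ℚ) : ℝ) = c₂ / c₃ := by
    rw [Rat.cast_div, hq₁, hq₁₂, div_div_div_cancel_left' _ _ hc₁]
  convert hasNearlyOrthogonalRoot_of_rat c₃ q₀ q₁ (q₁ / q₁₂) 1 hε using 1
  all_goals simp only [hq₀, hq₁, hq₂, Rat.cast_one, mul_one, mul_div_cancel₀ _ hc₃]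

theorem hasNearlyOrthogonalRoot (c₀ c₁ c₂ c₃ : ℝ) {ε : ℝ} (hε : 0 < ε) :
    HasNearlyOrthogonalRoot c₀ c₁ c₂ c₃ ε := by
  have of_ne_zero (a₀ a₁ a₂ a₃ : ℝ) (h₀₁ : a₀ ≠ 0 ∨ a₁ ≠ 0) (h₃ : a₃ ≠ 0) :
      HasNearlyOrthogonalRoot a₀ a₁ a₂ a₃ ε := by
    rcases h₀₁ with h₀ | h₁
    · exact (hasNearlyOrthogonalRoot_of_ne_zero a₁ a₂ h₀ h₃ hε).of_swap₀₁
    · exact hasNearlyOrthogonalRoot_of_ne_zero a₀ a₂ h₁ h₃ hε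
  by_cases h₀₁ : c₀ = 0 ∧ c₁ = 0
  · exact ⟨1, -1, 0, 0, by norm_num, by simpa [h₀₁] using hε⟩
  by_cases h₂₃ : c₂ = 0 ∧ c₃ = 0
  · exact ⟨0, 0, 1, -1, by norm_num, by simpa [h₂₃] using hε⟩
  rw [not_and_or] at h₀₁ h₂₃
  rcases h₂₃ with h₂ | h₃
  · exact (of_ne_zero c₀ c₁ c₃ c₂ h₀₁ h₂).of_swap₂₃
  · exact of_ne_zero c₀ c₁ c₂ c₃ h₀₁ h₃

/-- For any hyperplane `H = {x : B(ρ,x) = 0}` through the origin of `ℝ⁴`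
(`ρ ≠ 0`), there are lattice roots of `Γ^{2,2}` at arbitrarily small Euclidean
distance `|B(ρ,α)|/‖ρ‖₂` from `H`: either `H` contains a lattice root or there
are lattice roots arbitrarily close by. -/
theorem latticeRoots_accumulate_on_hyperplanes
    (ρ : EuclideanSpace ℝ (Fin 4)) (hρ : ρ ≠ 0) (ε : ℝ) (hε : 0 < ε) :
    ∃ α : Fin 4 → ℤ, IsLatticeRoot α ∧
      |GammaBR ρ (WithLp.toLp 2 (fun i => (α i : ℝ)))| < ε * ‖ρ‖ := by
  obtain ⟨k, l, m, n, hroot, hlt⟩ :=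
    hasNearlyOrthogonalRoot (ρ 1) (ρ 0) (ρ 3) (ρ 2) (mul_pos hε (norm_pos_iff.2 hρ))
  refine ⟨![k, l, m, n], hroot, ?_⟩
  rw [← abs_neg]
  convert hlt using 2
  simp [GammaBR]
  ring
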